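/- Let A be a k-algebra, σ a k-algebra automorphism of A, δ a σ-derivation, and n ≥ 0. Let C^m(A, M) = Hom_k(A^{⊗m}, M) denote the Hochschild cochain complex of an A-A-bimodule M, with differential b(g)(a_1,…,a_{m+1}) = a_1·g(a_2,…,a_{m+1}) + Σ_{i=1}^{m} (−1)^i g(a_1,…,a_i a_{i+1},…,a_{m+1}) + (−1)^{m+1} g(a_1,…,a_m)·a_{m+1}. Take coefficients A⊗A := A ⊗_k A with the outer bimodule structure a·(c⊗c')·b = ac⊗c'b, and A⊗A^{σ⁻¹} := A ⊗_k A with structure a·(c⊗c')·b = ac⊗c'σ⁻¹(b). For f ∈ C^n(A, A⊗A) set f_1 = (σ⊗id)∘f∘(σ⁻¹)^{⊗n}, f_2 = (id⊗σ⁻¹)∘f, and f_3 = (δ⊗id)∘f∘(σ⁻¹)^{⊗n} + (id⊗δσ⁻¹)∘f − Σ_{j=1}^{n} f∘(id^{⊗(j−1)} ⊗ δσ⁻¹ ⊗ (σ⁻¹)^{⊗(n−j)}), regarded as elements of C^n(A, A⊗A^{σ⁻¹}). Then the following are equivalent: (1) f is a cocycle (resp. coboundary) in C^n(A, A⊗A);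 (2) f_1 is a cocycle (resp. coboundary) in C^n(A, A⊗A^{σ⁻¹}); (3) f_2 is a cocycle (resp. coboundary) in C^n(A, A⊗A^{σ⁻¹}). Moreover, if these equivalent conditions hold, then f_3 is also a cocycle (resp. coboundary) in C^n(A, A⊗A^{σ⁻¹}). -/

import Mathlib

/-!
The bimodules `A ⊗ A` and `A ⊗ A^{σ⁻¹}` are isomorphic up to twisting scalars in two ways:
`σ ⊗ id` is `σ`-semilinear for both actions, and `id ⊗ σ⁻¹` is a bimodule isomorphism.
Conjugating cochains by such a map commutes with the Hochschild differential, which gives the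
equivalences for `f₁` and `f₂`.

For `f₃`, the Leibniz rule of `δ` makes `f ↦ f₃` commute with the differentials: `b(f₃)` is the
same twisting applied to `b f`, one degree higher. The correction terms that `δ ⊗ id` and
`id ⊗ δσ⁻¹` produce against the outer actions are the first and last summands of that twisting,
and `δσ⁻¹` applied to a merged product `a_i a_{i+1}` splits into the two neighbouring summands.
-/

open scoped TensorProduct
open CategoryTheory

noncomputable section
set_option synthInstance.maxHeartbeats 1000000
set_option maxHeartbeats 1000000

/-- Merging of two adjacent entries of a tuple. -/
def mergeAt {A : Type} [Mul A] {n : ℕ} (a : Fin (n + 1) → A) (i : Fin n) : Fin n → A :=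
  fun j =>
    if (j : ℕ) < (i : ℕ) then a (Fin.castSucc j)
    else if (j : ℕ) = (i : ℕ) then a (Fin.castSucc j) * a (Fin.succ j)
    else a (Fin.succ j)

section Stmt6

variable (k : Type) [CommRing k] (A : Type) [Ring A] [Algebra k A]

/-- `f : A^{⊗n} → A ⊗ A` is a Hochschild cocycle, for the bimodule structure on `A ⊗ A`
whose left action is `a · (c ⊗ c') = ac ⊗ c'` and whose right action is the given `ract`. -/
def IsCocycle (ract : A → A ⊗[k] A →ₗ[k] A ⊗[k] A) (n : ℕ)
    (f : TensorPower k n A →ₗ[k] A ⊗[k] A) : Prop :=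
  ∀ a : Fin (n + 1) → A,
    TensorProduct.map (LinearMap.mulLeft k (a 0)) LinearMap.id
        (f (PiTensorProduct.tprod k (fun j : Fin n => a j.succ)))
      + ∑ i : Fin n, ((-1 : ℤ) ^ ((i : ℕ) + 1)) •
          f (PiTensorProduct.tprod k (mergeAt a i))
      + ((-1 : ℤ) ^ (n + 1)) •
          ract (a (Fin.last n))
            (f (PiTensorProduct.tprod k (fun j : Fin n => a j.castSucc))) = 0

/-- `f : A^{⊗n} → A ⊗ A` is a Hochschild coboundary, for the bimodule structure on `A ⊗ A`
whose left action is `a · (c ⊗ c') = ac ⊗ c'` and whose right action is the given `ract`. -/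
def IsCoboundary (ract : A → A ⊗[k] A →ₗ[k] A ⊗[k] A) :
    (n : ℕ) → (TensorPower k n A →ₗ[k] A ⊗[k] A) → Prop
  | 0, f => f = 0
  | m + 1, f =>
    ∃ g : TensorPower k m A →ₗ[k] A ⊗[k] A,
      ∀ a : Fin (m + 1) → A,
        f (PiTensorProduct.tprod k a) =
          TensorProduct.map (LinearMap.mulLeft k (a 0)) LinearMap.id
              (g (PiTensorProduct.tprod k (fun j : Fin m => a j.succ)))
            + ∑ i : Fin m, ((-1 : ℤ) ^ ((i : ℕ) + 1)) •
                g (PiTensorProduct.tprod k (mergeAt a i))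
            + ((-1 : ℤ) ^ (m + 1)) •
                ract (a (Fin.last m))
                  (g (PiTensorProduct.tprod k (fun j : Fin m => a j.castSucc)))

/-- The right action `(c ⊗ c') · b = c ⊗ c'b` of the outer bimodule `A ⊗ A`. -/
def ractOuter (b : A) : A ⊗[k] A →ₗ[k] A ⊗[k] A :=
  TensorProduct.map LinearMap.id (LinearMap.mulRight k b)

/-- The right action `(c ⊗ c') · b = c ⊗ c'σ⁻¹(b)` of the twisted bimodule `A ⊗ A^{σ⁻¹}`. -/
def ractTwisted (σ : A ≃ₐ[k] A) (b : A) : A ⊗[k] A →ₗ[k] A ⊗[k] A :=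
  TensorProduct.map LinearMap.id (LinearMap.mulRight k (σ.symm b))

variable {k A}

variable (k) in
def lact (c : A) : A ⊗[k] A →ₗ[k] A ⊗[k] A :=
  TensorProduct.map (LinearMap.mulLeft k c) LinearMap.id

def hochschildDiff (ract : A → A ⊗[k] A →ₗ[k] A ⊗[k] A) (n : ℕ)
    (f : TensorPower k n A →ₗ[k] A ⊗[k] A) (a : Fin (n + 1) → A) : A ⊗[k] A :=
  lact k (a 0) (f (PiTensorProduct.tprod k fun j : Fin n => a j.succ))
    + ∑ i : Fin n, ((-1 : ℤ) ^ ((i : ℕ) + 1)) • f (PiTensorProduct.tprod k (mergeAt a i))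
    + ((-1 : ℤ) ^ (n + 1)) •
        ract (a (Fin.last n)) (f (PiTensorProduct.tprod k fun j : Fin n => a j.castSucc))

section HochschildDiff

variable {ract : A → A ⊗[k] A →ₗ[k] A ⊗[k] A} {n : ℕ}

theorem isCocycle_iff_hochschildDiff {f : TensorPower k n A →ₗ[k] A ⊗[k] A} :
    IsCocycle k A ract n f ↔ ∀ a, hochschildDiff ract n f a = 0 :=
  Iff.rfl

theorem isCoboundary_zero_iff {f : TensorPower k 0 A →ₗ[k] A ⊗[k] A} :
    IsCoboundary k A ract 0 f ↔ f = 0 :=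
  Iff.rfl

theorem isCoboundary_succ_iff_hochschildDiff {f : TensorPower k (n + 1) A →ₗ[k] A ⊗[k] A} :
    IsCoboundary k A ract (n + 1) f ↔
      ∃ g, ∀ a, f (PiTensorProduct.tprod k a) = hochschildDiff ract n g a :=
  Iff.rfl

theorem hochschildDiff_add (f g : TensorPower k n A →ₗ[k] A ⊗[k] A) (a : Fin (n + 1) → A) :
    hochschildDiff ract n (f + g) a = hochschildDiff ract n f a + hochschildDiff ract n g a := by
  simp only [hochschildDiff, LinearMap.add_apply, map_add, smul_add, Finset.sum_add_distrib]
  abel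

theorem hochschildDiff_sub (f g : TensorPower k n A →ₗ[k] A ⊗[k] A) (a : Fin (n + 1) → A) :
    hochschildDiff ract n (f - g) a = hochschildDiff ract n f a - hochschildDiff ract n g a := by
  simp only [hochschildDiff, LinearMap.sub_apply, map_sub, smul_sub, Finset.sum_sub_distrib]
  abel

theorem hochschildDiff_sum {ι : Type} (s : Finset ι) (F : ι → TensorPower k n A →ₗ[k] A ⊗[k] A)
    (a : Fin (n + 1) → A) :
    hochschildDiff ract n (∑ j ∈ s, F j) a = ∑ j ∈ s, hochschildDiff ract n (F j) a := by
  simp only [hochschildDiff, LinearMap.coe_sum, Finset.sum_apply, map_sum, Finset.smul_sum,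
    Finset.sum_add_distrib, Finset.sum_comm (s := s)]

end HochschildDiff

theorem mergeAt_map {M N F : Type} [Mul M] [Mul N] [FunLike F M N] [MulHomClass F M N] (τ : F)
    {n : ℕ} (a : Fin (n + 1) → M) (i : Fin n) :
    mergeAt (fun p => τ (a p)) i = fun p => τ (mergeAt a i p) := by
  funext p
  unfold mergeAt
  split_ifs <;> simp only [map_mul]

structure IsSemilinearBimoduleHom (τ : A ≃ₐ[k] A) (ractM ractN : A → A ⊗[k] A →ₗ[k] A ⊗[k] A)
    (Φ : A ⊗[k] A → A ⊗[k] A) : Prop where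
  map_lact : ∀ c x, Φ (lact k c x) = lact k (τ c) (Φ x)
  map_ract : ∀ b x, Φ (ractM b x) = ractN (τ b) (Φ x)

def cochainMap (τ : A ≃ₐ[k] A) (Φ : A ⊗[k] A ≃ₗ[k] A ⊗[k] A) (n : ℕ) :
    (TensorPower k n A →ₗ[k] A ⊗[k] A) ≃ₗ[k] (TensorPower k n A →ₗ[k] A ⊗[k] A) :=
  LinearEquiv.arrowCongr (PiTensorProduct.congr fun _ => τ.toLinearEquiv) Φ

section CochainMap

variable {τ : A ≃ₐ[k] A} {Φ : A ⊗[k] A ≃ₗ[k] A ⊗[k] A} {n : ℕ}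
  {ractM ractN : A → A ⊗[k] A →ₗ[k] A ⊗[k] A}

theorem cochainMap_tprod (f : TensorPower k n A →ₗ[k] A ⊗[k] A) (b : Fin n → A) :
    cochainMap τ Φ n f (PiTensorProduct.tprod k b) =
      Φ (f (PiTensorProduct.tprod k fun i => τ.symm (b i))) := by
  simp [cochainMap]

theorem cochainMap_symm_cochainMap (f : TensorPower k n A →ₗ[k] A ⊗[k] A) :
    cochainMap τ.symm Φ.symm n (cochainMap τ Φ n f) = f := by
  refine PiTensorProduct.ext (MultilinearMap.ext fun b => ?_)
  simp [cochainMap_tprod]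

theorem IsSemilinearBimoduleHom.symm (hΦ : IsSemilinearBimoduleHom τ ractM ractN Φ) :
    IsSemilinearBimoduleHom τ.symm ractN ractM Φ.symm where
  map_lact c x := Φ.injective <| by simp [hΦ.map_lact]
  map_ract b x := Φ.injective <| by simp [hΦ.map_ract]

theorem hochschildDiff_cochainMap (hΦ : IsSemilinearBimoduleHom τ ractM ractN Φ)
    (f : TensorPower k n A →ₗ[k] A ⊗[k] A) (a : Fin (n + 1) → A) :
    hochschildDiff ractN n (cochainMap τ Φ n f) a =
      Φ (hochschildDiff ractM n f fun i => τ.symm (a i)) := by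
  simp only [hochschildDiff, cochainMap_tprod, map_add, map_sum, map_zsmul, hΦ.map_lact,
    hΦ.map_ract, mergeAt_map, AlgEquiv.apply_symm_apply]

theorem isCocycle_cochainMap (hΦ : IsSemilinearBimoduleHom τ ractM ractN Φ)
    {f : TensorPower k n A →ₗ[k] A ⊗[k] A} (hf : IsCocycle k A ractM n f) :
    IsCocycle k A ractN n (cochainMap τ Φ n f) :=
  isCocycle_iff_hochschildDiff.2 fun a => by
    rw [hochschildDiff_cochainMap hΦ, isCocycle_iff_hochschildDiff.1 hf, map_zero]

theorem isCoboundary_cochainMap (hΦ : IsSemilinearBimoduleHom τ ractM ractN Φ) :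
    ∀ {n : ℕ} {f : TensorPower k n A →ₗ[k] A ⊗[k] A},
      IsCoboundary k A ractM n f → IsCoboundary k A ractN n (cochainMap τ Φ n f)
  | 0, f, hf => isCoboundary_zero_iff.2 <| by rw [isCoboundary_zero_iff.1 hf, map_zero]
  | m + 1, f, hf => by
    obtain ⟨g, hg⟩ := isCoboundary_succ_iff_hochschildDiff.1 hf
    refine isCoboundary_succ_iff_hochschildDiff.2 ⟨cochainMap τ Φ m g, fun a => ?_⟩
    rw [cochainMap_tprod, hg, hochschildDiff_cochainMap hΦ]

theorem isCocycle_cochainMap_iff (hΦ : IsSemilinearBimoduleHom τ ractM ractN Φ)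
    {f : TensorPower k n A →ₗ[k] A ⊗[k] A} :
    IsCocycle k A ractN n (cochainMap τ Φ n f) ↔ IsCocycle k A ractM n f := by
  refine ⟨fun h => ?_, isCocycle_cochainMap hΦ⟩
  simpa only [cochainMap_symm_cochainMap] using isCocycle_cochainMap hΦ.symm h

theorem isCoboundary_cochainMap_iff (hΦ : IsSemilinearBimoduleHom τ ractM ractN Φ)
    {f : TensorPower k n A →ₗ[k] A ⊗[k] A} :
    IsCoboundary k A ractN n (cochainMap τ Φ n f) ↔ IsCoboundary k A ractM n f := by
  refine ⟨fun h => ?_, isCoboundary_cochainMap hΦ⟩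
  simpa only [cochainMap_symm_cochainMap] using isCoboundary_cochainMap hΦ.symm h

end CochainMap

theorem isSemilinearBimoduleHom_congr_left (σ : A ≃ₐ[k] A) :
    IsSemilinearBimoduleHom σ (ractOuter k A) (ractTwisted k A σ)
      (TensorProduct.congr σ.toLinearEquiv (LinearEquiv.refl k A)) where
  map_lact c x := by
    induction x using TensorProduct.induction_on with
    | zero => simp
    | tmul y z => simp [lact]
    | add u v hu hv => simp only [map_add, hu, hv]
  map_ract b x := by
    induction x using TensorProduct.induction_on with
    | zero => simp
    | tmul y z => simp [ractOuter, ractTwisted]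
    | add u v hu hv => simp only [map_add, hu, hv]

theorem isSemilinearBimoduleHom_congr_right (σ : A ≃ₐ[k] A) :
    IsSemilinearBimoduleHom (AlgEquiv.refl) (ractOuter k A) (ractTwisted k A σ)
      (TensorProduct.congr (LinearEquiv.refl k A) σ.symm.toLinearEquiv) where
  map_lact c x := by
    induction x using TensorProduct.induction_on with
    | zero => simp
    | tmul y z => simp [lact]
    | add u v hu hv => simp only [map_add, hu, hv]
  map_ract b x := by
    induction x using TensorProduct.induction_on with
    | zero => simp
    | tmul y z => simp [ractOuter, ractTwisted]
    | add u v hu hv => simp only [map_add, hu, hv]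

theorem cochainMap_congr_left (σ : A ≃ₐ[k] A) {n : ℕ} (f : TensorPower k n A →ₗ[k] A ⊗[k] A) :
    cochainMap σ (TensorProduct.congr σ.toLinearEquiv (LinearEquiv.refl k A)) n f =
      TensorProduct.map σ.toLinearMap LinearMap.id ∘ₗ f ∘ₗ
        PiTensorProduct.map fun _ => σ.symm.toLinearMap :=
  rfl

theorem cochainMap_congr_right (σ : A ≃ₐ[k] A) {n : ℕ} (f : TensorPower k n A →ₗ[k] A ⊗[k] A) :
    cochainMap .refl (TensorProduct.congr (LinearEquiv.refl k A) σ.symm.toLinearEquiv) n f =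
      TensorProduct.map LinearMap.id σ.symm.toLinearMap ∘ₗ f :=
  PiTensorProduct.ext <| MultilinearMap.ext fun b => by simp [cochainMap_tprod]; rfl

section Twist

variable (σ : A ≃ₐ[k] A) (δ : A →ₗ[k] A)

def twistAt {m : ℕ} (b : Fin m → A) (j : Fin m) : Fin m → A :=
  fun i => if (i : ℕ) < (j : ℕ) then b i else if i = j then δ (σ.symm (b j)) else σ.symm (b i)

def twistAtMap (n : ℕ) (j : Fin n) : TensorPower k n A →ₗ[k] TensorPower k n A :=
  PiTensorProduct.map fun i : Fin n =>
    if (i : ℕ) < (j : ℕ) then LinearMap.id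
    else if i = j then δ ∘ₗ σ.symm.toLinearMap else σ.symm.toLinearMap

/-- The map `f ↦ f₃`; the summand `j` of the paper is `twistAtMap σ δ n (j - 1)` here. -/
def twistCochain (n : ℕ) (f : TensorPower k n A →ₗ[k] A ⊗[k] A) :
    TensorPower k n A →ₗ[k] A ⊗[k] A :=
  TensorProduct.map δ LinearMap.id ∘ₗ f ∘ₗ PiTensorProduct.map (fun _ => σ.symm.toLinearMap)
    + TensorProduct.map LinearMap.id (δ ∘ₗ σ.symm.toLinearMap) ∘ₗ f
    - ∑ j : Fin n, f ∘ₗ twistAtMap σ δ n j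

theorem twistAtMap_tprod {n : ℕ} (j : Fin n) (b : Fin n → A) :
    twistAtMap σ δ n j (PiTensorProduct.tprod k b) = PiTensorProduct.tprod k (twistAt σ δ b j) := by
  simp only [twistAtMap, PiTensorProduct.map_tprod]
  congr 1
  funext i
  unfold twistAt
  split_ifs <;> simp [*]

theorem twistCochain_tprod {n : ℕ} (f : TensorPower k n A →ₗ[k] A ⊗[k] A) (b : Fin n → A) :
    twistCochain σ δ n f (PiTensorProduct.tprod k b) =
      TensorProduct.map δ LinearMap.id (f (PiTensorProduct.tprod k fun i => σ.symm (b i)))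
        + TensorProduct.map LinearMap.id (δ ∘ₗ σ.symm.toLinearMap) (f (PiTensorProduct.tprod k b))
        - ∑ j : Fin n, f (PiTensorProduct.tprod k (twistAt σ δ b j)) := by
  simp [twistCochain, twistAtMap_tprod]

variable {σ δ}

theorem twistAt_of_lt {m : ℕ} {b : Fin m → A} {i j : Fin m} (h : i < j) :
    twistAt σ δ b j i = b i :=
  if_pos h

theorem twistAt_self {m : ℕ} (b : Fin m → A) (j : Fin m) :
    twistAt σ δ b j j = δ (σ.symm (b j)) := by
  simp [twistAt]

theorem twistAt_of_gt {m : ℕ} {b : Fin m → A} {i j : Fin m} (h : j < i) :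
    twistAt σ δ b j i = σ.symm (b i) := by
  simp [twistAt, h.not_gt, h.ne']

theorem twistAt_succ_comp_succ {m : ℕ} (b : Fin (m + 1) → A) (j : Fin m) :
    (fun i : Fin m => twistAt σ δ b j.succ i.succ) = twistAt σ δ (fun i => b i.succ) j := by
  funext i
  simp only [twistAt, Fin.val_succ, Nat.add_lt_add_iff_right, Fin.succ_inj]

theorem twistAt_castSucc_comp_castSucc {m : ℕ} (b : Fin (m + 1) → A) (j : Fin m) :
    (fun i : Fin m => twistAt σ δ b j.castSucc i.castSucc) =
      twistAt σ δ (fun i => b i.castSucc) j := by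
  funext i
  simp only [twistAt, Fin.val_castSucc, Fin.castSucc_inj]

end Twist

section Merge

variable {σ : A ≃ₐ[k] A} {δ : A →ₗ[k] A} {n : ℕ}

theorem twistAt_mergeAt_of_lt (a : Fin (n + 1) → A) {i j : Fin n} (h : j < i) :
    twistAt σ δ (mergeAt a i) j = mergeAt (twistAt σ δ a j.castSucc) i := by
  funext p
  simp only [twistAt, mergeAt, Fin.val_castSucc, Fin.val_succ]
  split_ifs <;>
    first
      | rfl
      | exact map_mul σ.symm _ _
      | (exfalso; simp only [Fin.ext_iff, Fin.lt_def, Fin.val_castSucc, Fin.val_succ] at *; omega)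

theorem twistAt_mergeAt_of_gt (a : Fin (n + 1) → A) {i j : Fin n} (h : i < j) :
    twistAt σ δ (mergeAt a i) j = mergeAt (twistAt σ δ a j.succ) i := by
  funext p
  simp only [twistAt, mergeAt, Fin.val_castSucc, Fin.val_succ]
  split_ifs <;>
    first
      | rfl
      | exact map_mul σ.symm _ _
      | (exfalso; simp only [Fin.ext_iff, Fin.lt_def, Fin.val_castSucc, Fin.val_succ] at *; omega)

theorem mergeAt_twistAt_castSucc_self (a : Fin (n + 1) → A) (i : Fin n) :
    mergeAt (twistAt σ δ a i.castSucc) i =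
      Function.update (twistAt σ δ (mergeAt a i) i) i
        (δ (σ.symm (a i.castSucc)) * σ.symm (a i.succ)) := by
  funext p
  simp only [Function.update_apply, twistAt, mergeAt, Fin.val_castSucc, Fin.val_succ]
  split_ifs <;>
    first
      | rfl
      | exact map_mul σ.symm _ _
      | (subst_vars; rfl)
      | (exfalso; simp only [Fin.ext_iff, Fin.val_castSucc, Fin.val_succ] at *; omega)

theorem mergeAt_twistAt_succ_self (a : Fin (n + 1) → A) (i : Fin n) :
    mergeAt (twistAt σ δ a i.succ) i =
      Function.update (twistAt σ δ (mergeAt a i) i) i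
        (a i.castSucc * δ (σ.symm (a i.succ))) := by
  funext p
  simp only [Function.update_apply, twistAt, mergeAt, Fin.val_castSucc, Fin.val_succ]
  split_ifs <;>
    first
      | rfl
      | exact map_mul σ.symm _ _
      | (subst_vars; rfl)
      | (exfalso; simp only [Fin.ext_iff, Fin.val_castSucc, Fin.val_succ] at *; omega)

end Merge

section Derivation

variable {σ : A ≃ₐ[k] A} {δ : A →ₗ[k] A} {n : ℕ}

theorem map_lact_of_leibniz (hδ : ∀ a b : A, δ (a * b) = δ a * b + σ a * δ b) (c : A)
    (x : A ⊗[k] A) :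
    TensorProduct.map δ LinearMap.id (lact k c x) =
      lact k (δ c) x + lact k (σ c) (TensorProduct.map δ LinearMap.id x) := by
  induction x using TensorProduct.induction_on with
  | zero => simp
  | tmul y z => simp [lact, hδ, TensorProduct.add_tmul]
  | add u v hu hv =>
    simp only [map_add, hu, hv]
    abel

theorem map_ractOuter_of_leibniz (hδ : ∀ a b : A, δ (a * b) = δ a * b + σ a * δ b) (b : A)
    (x : A ⊗[k] A) :
    TensorProduct.map LinearMap.id (δ ∘ₗ σ.symm.toLinearMap) (ractOuter k A b x) =
      ractOuter k A (σ.symm b) (TensorProduct.map LinearMap.id (δ ∘ₗ σ.symm.toLinearMap) x)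
        + ractOuter k A (δ (σ.symm b)) x := by
  induction x using TensorProduct.induction_on with
  | zero => simp
  | tmul y z => simp [ractOuter, hδ, TensorProduct.tmul_add]
  | add u v hu hv =>
    simp only [map_add, hu, hv]
    abel

theorem tprod_twistAt_mergeAt_self (hδ : ∀ a b : A, δ (a * b) = δ a * b + σ a * δ b)
    (a : Fin (n + 1) → A) (i : Fin n) :
    PiTensorProduct.tprod k (twistAt σ δ (mergeAt a i) i) =
      PiTensorProduct.tprod k (mergeAt (twistAt σ δ a i.castSucc) i) +
        PiTensorProduct.tprod k (mergeAt (twistAt σ δ a i.succ) i) := by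
  have hi : twistAt σ δ (mergeAt a i) i i =
      δ (σ.symm (a i.castSucc)) * σ.symm (a i.succ) + a i.castSucc * δ (σ.symm (a i.succ)) := by
    simp [twistAt_self, mergeAt, hδ]
  rw [mergeAt_twistAt_castSucc_self, mergeAt_twistAt_succ_self,
    ← (PiTensorProduct.tprod k).map_update_add, ← hi, Function.update_eq_self]

theorem sum_mergeAt_twistAt (hδ : ∀ a b : A, δ (a * b) = δ a * b + σ a * δ b)
    (f : TensorPower k n A →ₗ[k] A ⊗[k] A) (a : Fin (n + 1) → A) (i : Fin n) :
    ∑ j : Fin (n + 1), f (PiTensorProduct.tprod k (mergeAt (twistAt σ δ a j) i)) =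
      ∑ j : Fin n, f (PiTensorProduct.tprod k (twistAt σ δ (mergeAt a i) j)) := by
  have key : ∀ j : Fin n,
      f (PiTensorProduct.tprod k (twistAt σ δ (mergeAt a i) j)) =
        f (PiTensorProduct.tprod k (mergeAt (twistAt σ δ a (i.castSucc.succAbove j)) i)) +
          if j = i then f (PiTensorProduct.tprod k (mergeAt (twistAt σ δ a i.castSucc) i))
          else 0 := by
    intro j
    rcases lt_trichotomy j i with h | rfl | h
    · rw [if_neg h.ne, add_zero,
        Fin.succAbove_of_castSucc_lt _ _ (Fin.castSucc_lt_castSucc_iff.2 h),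
        twistAt_mergeAt_of_lt a h]
    · rw [if_pos rfl, Fin.succAbove_of_le_castSucc _ _ le_rfl, tprod_twistAt_mergeAt_self hδ,
        map_add, add_comm]
    · rw [if_neg h.ne', add_zero,
        Fin.succAbove_of_le_castSucc _ _ (Fin.castSucc_le_castSucc_iff.2 h.le),
        twistAt_mergeAt_of_gt a h]
  rw [Fin.sum_univ_succAbove _ i.castSucc, Finset.sum_congr rfl fun j _ => key j,
    Finset.sum_add_distrib, Finset.sum_ite_eq' Finset.univ i, if_pos (Finset.mem_univ i), add_comm]

end Derivation

section TwistCochain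

variable {σ : A ≃ₐ[k] A} {δ : A →ₗ[k] A} {n : ℕ}

theorem sum_lact_twistAt (f : TensorPower k n A →ₗ[k] A ⊗[k] A) (a : Fin (n + 1) → A) :
    ∑ j : Fin (n + 1), lact k (twistAt σ δ a j 0)
        (f (PiTensorProduct.tprod k fun p : Fin n => twistAt σ δ a j p.succ)) =
      lact k (δ (σ.symm (a 0))) (f (PiTensorProduct.tprod k fun i : Fin n => σ.symm (a i.succ)))
        + ∑ j : Fin n, lact k (a 0)
            (f (PiTensorProduct.tprod k (twistAt σ δ (fun p : Fin n => a p.succ) j))) := by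
  have hzero : (fun p : Fin n => twistAt σ δ a 0 p.succ) = fun p => σ.symm (a p.succ) :=
    funext fun p => twistAt_of_gt p.succ_pos
  simp only [Fin.sum_univ_succ, twistAt_self, hzero, twistAt_succ_comp_succ,
    twistAt_of_lt (Fin.succ_pos _)]

theorem sum_ractOuter_twistAt (f : TensorPower k n A →ₗ[k] A ⊗[k] A) (a : Fin (n + 1) → A) :
    ∑ j : Fin (n + 1), ractOuter k A (twistAt σ δ a j (Fin.last n))
        (f (PiTensorProduct.tprod k fun p : Fin n => twistAt σ δ a j p.castSucc)) =
      ractOuter k A (δ (σ.symm (a (Fin.last n))))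
          (f (PiTensorProduct.tprod k fun j : Fin n => a j.castSucc))
        + ∑ j : Fin n, ractOuter k A (σ.symm (a (Fin.last n)))
            (f (PiTensorProduct.tprod k (twistAt σ δ (fun p : Fin n => a p.castSucc) j))) := by
  have hlast : (fun p : Fin n => twistAt σ δ a (Fin.last n) p.castSucc) = fun p => a p.castSucc :=
    funext fun p => twistAt_of_lt p.castSucc_lt_last
  simp only [Fin.sum_univ_castSucc, twistAt_self, hlast, twistAt_castSucc_comp_castSucc,
    twistAt_of_gt (Fin.castSucc_lt_last _), add_comm]

theorem hochschildDiff_map_leibniz_left (hδ : ∀ a b : A, δ (a * b) = δ a * b + σ a * δ b)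
    (f : TensorPower k n A →ₗ[k] A ⊗[k] A) (a : Fin (n + 1) → A) :
    hochschildDiff (ractTwisted k A σ) n
        (TensorProduct.map δ LinearMap.id ∘ₗ f ∘ₗ
          PiTensorProduct.map fun _ => σ.symm.toLinearMap) a =
      TensorProduct.map δ LinearMap.id (hochschildDiff (ractOuter k A) n f fun i => σ.symm (a i))
        - lact k (δ (σ.symm (a 0)))
            (f (PiTensorProduct.tprod k fun i : Fin n => σ.symm (a i.succ))) := by
  have hr (b : A) (x : A ⊗[k] A) : TensorProduct.map δ LinearMap.id (ractOuter k A b x) =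
      ractOuter k A b (TensorProduct.map δ LinearMap.id x) := by
    simp only [ractOuter, TensorProduct.map_map, LinearMap.id_comp, LinearMap.comp_id]
  simp only [hochschildDiff, LinearMap.comp_apply, PiTensorProduct.map_tprod, map_add, map_sum,
    map_zsmul, map_lact_of_leibniz hδ, hr, mergeAt_map, ractTwisted, AlgEquiv.toLinearMap_apply,
    AlgEquiv.apply_symm_apply]
  abel

theorem hochschildDiff_map_leibniz_right (hδ : ∀ a b : A, δ (a * b) = δ a * b + σ a * δ b)
    (f : TensorPower k n A →ₗ[k] A ⊗[k] A) (a : Fin (n + 1) → A) :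
    hochschildDiff (ractTwisted k A σ) n
        (TensorProduct.map LinearMap.id (δ ∘ₗ σ.symm.toLinearMap) ∘ₗ f) a =
      TensorProduct.map LinearMap.id (δ ∘ₗ σ.symm.toLinearMap)
          (hochschildDiff (ractOuter k A) n f a)
        - ((-1 : ℤ) ^ (n + 1)) • ractOuter k A (δ (σ.symm (a (Fin.last n))))
            (f (PiTensorProduct.tprod k fun j : Fin n => a j.castSucc)) := by
  have hl (c : A) (x : A ⊗[k] A) :
      TensorProduct.map LinearMap.id (δ ∘ₗ σ.symm.toLinearMap) (lact k c x) =
        lact k c (TensorProduct.map LinearMap.id (δ ∘ₗ σ.symm.toLinearMap) x) := by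
    simp only [lact, TensorProduct.map_map, LinearMap.id_comp, LinearMap.comp_id]
  simp only [hochschildDiff, LinearMap.comp_apply, map_add, map_sum, map_zsmul, hl,
    map_ractOuter_of_leibniz hδ, ractTwisted, smul_add]
  abel

theorem sum_hochschildDiff_twistAt (hδ : ∀ a b : A, δ (a * b) = δ a * b + σ a * δ b)
    (f : TensorPower k n A →ₗ[k] A ⊗[k] A) (a : Fin (n + 1) → A) :
    ∑ j : Fin (n + 1), hochschildDiff (ractOuter k A) n f (twistAt σ δ a j) =
      lact k (δ (σ.symm (a 0))) (f (PiTensorProduct.tprod k fun i : Fin n => σ.symm (a i.succ)))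
        + ((-1 : ℤ) ^ (n + 1)) • ractOuter k A (δ (σ.symm (a (Fin.last n))))
            (f (PiTensorProduct.tprod k fun j : Fin n => a j.castSucc))
        + ∑ j : Fin n, hochschildDiff (ractTwisted k A σ) n (f ∘ₗ twistAtMap σ δ n j) a := by
  have hmerge : ∑ j : Fin (n + 1), ∑ i : Fin n, ((-1 : ℤ) ^ ((i : ℕ) + 1)) •
        f (PiTensorProduct.tprod k (mergeAt (twistAt σ δ a j) i)) =
      ∑ j : Fin n, ∑ i : Fin n, ((-1 : ℤ) ^ ((i : ℕ) + 1)) •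
        f (PiTensorProduct.tprod k (twistAt σ δ (mergeAt a i) j)) := by
    rw [Finset.sum_comm]
    simp only [← Finset.smul_sum, sum_mergeAt_twistAt hδ]
    simp only [Finset.smul_sum]
    exact Finset.sum_comm
  simp only [hochschildDiff, LinearMap.comp_apply, twistAtMap_tprod, ractTwisted,
    Finset.sum_add_distrib, ← Finset.smul_sum, sum_lact_twistAt, sum_ractOuter_twistAt, hmerge]
  simp only [smul_add, Finset.smul_sum]
  abel

theorem hochschildDiff_twistCochain (hδ : ∀ a b : A, δ (a * b) = δ a * b + σ a * δ b)
    (f : TensorPower k n A →ₗ[k] A ⊗[k] A) (a : Fin (n + 1) → A) :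
    hochschildDiff (ractTwisted k A σ) n (twistCochain σ δ n f) a =
      TensorProduct.map δ LinearMap.id (hochschildDiff (ractOuter k A) n f fun i => σ.symm (a i))
        + TensorProduct.map LinearMap.id (δ ∘ₗ σ.symm.toLinearMap)
            (hochschildDiff (ractOuter k A) n f a)
        - ∑ j : Fin (n + 1), hochschildDiff (ractOuter k A) n f (twistAt σ δ a j) := by
  rw [twistCochain, hochschildDiff_sub, hochschildDiff_add, hochschildDiff_map_leibniz_left hδ,
    hochschildDiff_map_leibniz_right hδ, hochschildDiff_sum, sum_hochschildDiff_twistAt hδ]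
  abel

theorem isCocycle_twistCochain (hδ : ∀ a b : A, δ (a * b) = δ a * b + σ a * δ b)
    {f : TensorPower k n A →ₗ[k] A ⊗[k] A} (hf : IsCocycle k A (ractOuter k A) n f) :
    IsCocycle k A (ractTwisted k A σ) n (twistCochain σ δ n f) :=
  isCocycle_iff_hochschildDiff.2 fun a => by
    simp [hochschildDiff_twistCochain hδ, isCocycle_iff_hochschildDiff.1 hf]

theorem isCoboundary_twistCochain (hδ : ∀ a b : A, δ (a * b) = δ a * b + σ a * δ b) :
    ∀ {n : ℕ} {f : TensorPower k n A →ₗ[k] A ⊗[k] A},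
      IsCoboundary k A (ractOuter k A) n f →
        IsCoboundary k A (ractTwisted k A σ) n (twistCochain σ δ n f)
  | 0, f, hf => isCoboundary_zero_iff.2 <| by simp [isCoboundary_zero_iff.1 hf, twistCochain]
  | m + 1, f, hf => by
    obtain ⟨g, hg⟩ := isCoboundary_succ_iff_hochschildDiff.1 hf
    refine isCoboundary_succ_iff_hochschildDiff.2 ⟨twistCochain σ δ m g, fun a => ?_⟩
    simp only [twistCochain_tprod, hg, hochschildDiff_twistCochain hδ]

end TwistCochain

/-- **Cocycles and coboundaries under the twistings `f ↦ f₁, f₂, f₃`.**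
Let `σ` be an automorphism of `A`, `δ` a `σ`-derivation, and `f : A^{⊗n} → A ⊗ A` a
`k`-linear map.  With `f₁ = (σ⊗id)∘f∘(σ⁻¹)^{⊗n}`, `f₂ = (id⊗σ⁻¹)∘f` and
`f₃ = (δ⊗id)∘f∘(σ⁻¹)^{⊗n} + (id⊗δσ⁻¹)∘f − Σ_j f∘(id^{⊗(j-1)}⊗δσ⁻¹⊗(σ⁻¹)^{⊗(n-j)})`
(the latter specified by its values on pure tensors), the following are equivalent:
`f` is a cocycle (resp. coboundary) in `C^n(A, A⊗A)`; `f₁` is a cocycle (resp. coboundary)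
in `C^n(A, A⊗A^{σ⁻¹})`; `f₂` is a cocycle (resp. coboundary) in `C^n(A, A⊗A^{σ⁻¹})`.
Moreover, if these hold then `f₃` is a cocycle (resp. coboundary) in `C^n(A, A⊗A^{σ⁻¹})`. -/
theorem cocycle_coboundary_twisting
    (σ : A ≃ₐ[k] A) (δ : A →ₗ[k] A)
    (hδ : ∀ a b : A, δ (a * b) = δ a * b + σ a * δ b)
    (n : ℕ) (f f3 : TensorPower k n A →ₗ[k] A ⊗[k] A)
    (hf3 : ∀ a : Fin n → A,
      f3 (PiTensorProduct.tprod k a) =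
        TensorProduct.map δ LinearMap.id
            (f (PiTensorProduct.tprod k (fun i : Fin n => σ.symm (a i))))
          + TensorProduct.map LinearMap.id (δ.comp σ.symm.toLinearMap)
              (f (PiTensorProduct.tprod k a))
          - ∑ j : Fin n,
              f (PiTensorProduct.tprod k (fun i : Fin n =>
                if (i : ℕ) < (j : ℕ) then a i
                else if i = j then δ (σ.symm (a j))
                else σ.symm (a i)))) :
    -- `f₁` and `f₂`
    letI f1 : TensorPower k n A →ₗ[k] A ⊗[k] A :=
      (TensorProduct.map σ.toLinearMap LinearMap.id).comp
        (f.comp (PiTensorProduct.map (fun _ : Fin n => σ.symm.toLinearMap)))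
    letI f2 : TensorPower k n A →ₗ[k] A ⊗[k] A :=
      (TensorProduct.map LinearMap.id σ.symm.toLinearMap).comp f
    ((IsCocycle k A (ractOuter k A) n f ↔ IsCocycle k A (ractTwisted k A σ) n f1) ∧
      (IsCocycle k A (ractOuter k A) n f ↔ IsCocycle k A (ractTwisted k A σ) n f2) ∧
      (IsCocycle k A (ractOuter k A) n f → IsCocycle k A (ractTwisted k A σ) n f3)) ∧
    ((IsCoboundary k A (ractOuter k A) n f ↔ IsCoboundary k A (ractTwisted k A σ) n f1) ∧
      (IsCoboundary k A (ractOuter k A) n f ↔ IsCoboundary k A (ractTwisted k A σ) n f2) ∧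
      (IsCoboundary k A (ractOuter k A) n f → IsCoboundary k A (ractTwisted k A σ) n f3)) := by
  have hf3' : f3 = twistCochain σ δ n f :=
    PiTensorProduct.ext <| MultilinearMap.ext fun b =>
      (hf3 b).trans (twistCochain_tprod σ δ f b).symm
  rw [← cochainMap_congr_left, ← cochainMap_congr_right, hf3',
    isCocycle_cochainMap_iff (isSemilinearBimoduleHom_congr_left σ),
    isCocycle_cochainMap_iff (isSemilinearBimoduleHom_congr_right σ),
    isCoboundary_cochainMap_iff (isSemilinearBimoduleHom_congr_left σ),
    isCoboundary_cochainMap_iff (isSemilinearBimoduleHom_congr_right σ)]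
  exact ⟨⟨.rfl, .rfl, isCocycle_twistCochain hδ⟩, .rfl, .rfl, isCoboundary_twistCochain hδ⟩

end Stmt6
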